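/- arXiv:2407.05065 — 3 statements merged into one kernel-verified Lean document; each statement's English description precedes it below -/
import Mathlib

section
/- If S is a nonempty set of positive integers closed under addition, then S is eventually linear: there exist integers N and k ≥ 1 such that for all n > N, n ∈ S if and only if k divides n. -/
/-- A nonempty set of positive integers closed under addition is eventually linear. -/
theorem stmt_3 (S : Set ℕ) (hne : S.Nonempty) (hpos : ∀ s ∈ S, 0 < s)
    (hclosed : ∀ s ∈ S, ∀ t ∈ S, s + t ∈ S) :
    ∃ N k : ℕ, 1 ≤ k ∧ ∀ n > N, (n ∈ S ↔ k ∣ n) := by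
  obtain ⟨a, ha⟩ := hne
  set T : Set ℕ := insert 0 S with hTdef
  have hTadd : ∀ x ∈ T, ∀ y ∈ T, x + y ∈ T := by
    rintro x hx y hy
    rcases Set.mem_insert_iff.mp hx with rfl | hx <;>
      rcases Set.mem_insert_iff.mp hy with rfl | hy
    · exact Set.mem_insert _ _
    · simpa [hTdef] using Set.mem_insert_iff.mpr (Or.inr hy)
    · simpa [hTdef] using Set.mem_insert_iff.mpr (Or.inr hx)
    · exact Set.mem_insert_iff.mpr (Or.inr (hclosed _ hx _ hy))
  have hmul : ∀ (n : ℕ) (x : ℕ), x ∈ T → n * x ∈ T := by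
    intro n
    induction n with
    | zero => intro x _; rw [Nat.zero_mul]; exact Set.mem_insert _ _
    | succ n ih =>
      intro x hx
      have h : (n + 1) * x = n * x + x := by ring
      rw [h]
      exact hTadd _ (ih x hx) _ hx
  have hmemS : ∀ z ∈ T, z ≠ 0 → z ∈ S := by
    intro z hz hz0
    rcases Set.mem_insert_iff.mp hz with rfl | hz
    · exact absurd rfl hz0
    · exact hz
  -- the set of realizable positive differences
  set D : Set ℕ := {d | 0 < d ∧ ∃ t ∈ T, t + d ∈ S} with hDdef
  have haD : a ∈ D := ⟨hpos a ha, 0, Set.mem_insert _ _, by simpa using ha⟩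
  set k := sInf D with hkdef
  have hkD : k ∈ D := Nat.sInf_mem ⟨a, haD⟩
  obtain ⟨hkpos, t, htT, hts⟩ := hkD
  have htkpos : 0 < t + k := by omega
  -- Step 1: k divides every element of S
  have hdvd : ∀ m ∈ S, k ∣ m := by
    intro m hm
    by_contra hnd
    obtain ⟨q, r, hqr, hrk⟩ : ∃ q r, m = k * q + r ∧ r < k :=
      ⟨m / k, m % k, (Nat.div_add_mod m k).symm, Nat.mod_lt _ hkpos⟩
    have hr0 : 0 < r := by
      rcases Nat.eq_zero_or_pos r with h | h
      · exact absurd ⟨q, by rw [hqr, h, Nat.add_zero]⟩ hnd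
      · exact h
    have hmemD : k - r ∈ D := by
      refine ⟨by omega, (q + 1) * t + m, hTadd _ (hmul _ _ htT) _
        (Set.mem_insert_iff.mpr (Or.inr hm)), ?_⟩
      have key : (q + 1) * t + m + (k - r) = (q + 1) * (t + k) := by
        have h1 : (q + 1) * (t + k) = (q + 1) * t + (k * q + k) := by ring
        rw [h1, hqr]
        generalize (q + 1) * t = A
        generalize k * q = B
        omega
      rw [key]
      exact hmemS _ (hmul (q + 1) (t + k) (Set.mem_insert_iff.mpr (Or.inr hts)))
        (Nat.mul_ne_zero (by omega) (by omega))
    have hle : k ≤ k - r := Nat.sInf_le hmemD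
    omega
  -- Step 2: k divides t
  have hkt : k ∣ t := by
    rcases Set.mem_insert_iff.mp htT with rfl | ht
    · exact dvd_zero k
    · exact hdvd t ht
  obtain ⟨c, hc⟩ := hkt
  refine ⟨c * c * k, k, hkpos, ?_⟩
  intro n hn
  constructor
  · intro hnS
    exact hdvd n hnS
  · rintro ⟨m, rfl⟩
    have hm : c * c < m := by
      rcases Nat.lt_or_ge (c * c) m with h | h
      · exact h
      · exfalso
        have hle : k * m ≤ c * c * k := by
          calc k * m ≤ k * (c * c) := Nat.mul_le_mul_left _ h
            _ = c * c * k := Nat.mul_comm _ _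
        exact absurd hn (not_lt.mpr hle)
    have hmpos : 0 < m := lt_of_le_of_lt (Nat.zero_le _) hm
    by_cases hc0 : c = 0
    · -- t = 0, so k ∈ S
      subst hc0
      rw [Nat.mul_zero] at hc
      subst hc
      rw [Nat.zero_add] at hts
      rw [Nat.mul_comm]
      exact hmemS _ (hmul m k (Set.mem_insert_iff.mpr (Or.inr hts)))
        (Nat.mul_ne_zero (by omega) (by omega))
    · have hcpos : 0 < c := Nat.pos_of_ne_zero hc0
      set q := m / c with hq
      set r := m % c with hr
      have hrc : r < c := Nat.mod_lt _ hcpos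
      have hdm : c * q + r = m := Nat.div_add_mod m c
      have hqc : c ≤ q := by
        rw [hq, Nat.le_div_iff_mul_le hcpos]
        exact Nat.le_of_lt hm
      obtain ⟨d, hd⟩ : ∃ d, q = r + d := ⟨q - r, by omega⟩
      have key : r * (t + k) + d * t = k * m := by
        rw [hc, ← hdm, hd]; ring
      rw [← key]
      refine hmemS _ (hTadd _ (hmul r (t + k) (Set.mem_insert_iff.mpr (Or.inr hts))) _
        (hmul d t htT)) ?_
      rw [key]
      exact Nat.mul_ne_zero (by omega) (by omega)
end

section
/- Lemma 1: Let A be a set of positive integers closed under taking multisums above a threshold a_n, i.e., whenever a = a_i + a_j = a_r + a_s > a_n with a_i,a_j,a_r,a_s ∈ A, i<r<s<j (the four elements distinct except possibly the middle pair equal), then a ∈ A. Suppose d, a, b, a+d, b+d are five distinct elements of A and a_n < a+b+d =: k. Then every positive multiple of k is in A. -/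
/-- Lemma 1: if A is closed under multisums above aₙ and d,a,b,a+d,b+d are five
distinct elements of A with a+b+d > aₙ, then every positive multiple of k = a+b+d
is in A. -/
theorem stmt_4 (A : Set ℕ) (an : ℕ)
    (hclosed : ∀ w > an, (∃ p u v q : ℕ, p ∈ A ∧ u ∈ A ∧ v ∈ A ∧ q ∈ A ∧
      p < u ∧ u ≤ v ∧ v < q ∧ w = p + q ∧ w = u + v) → w ∈ A)
    (d a b : ℕ) (hd : d ∈ A) (ha : a ∈ A) (hb : b ∈ A)
    (had : a + d ∈ A) (hbd : b + d ∈ A)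
    (h1 : d ≠ a) (h2 : d ≠ b) (h3 : d ≠ a + d) (h4 : d ≠ b + d)
    (h5 : a ≠ b) (h6 : a ≠ a + d) (h7 : a ≠ b + d)
    (h8 : b ≠ a + d) (h9 : b ≠ b + d) (h10 : a + d ≠ b + d)
    (hk : an < a + b + d) :
    ∀ m ≥ 1, m * (a + b + d) ∈ A := by
  have hd0 : 0 < d := by omega
  have ha0 : 0 < a := by omega
  have hb0 : 0 < b := by omega
  set k := a + b + d with hkdef
  -- Step 1 : k ∈ A
  have hkA : k ∈ A := by
    apply hclosed _ (by omega)
    rcases lt_or_gt_of_ne h5 with hab | hab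
    · rcases le_total b (a + d) with hc | hc
      · exact ⟨a, b, a + d, b + d, ha, hb, had, hbd, by omega, by omega, by omega,
          by omega, by omega⟩
      · exact ⟨a, a + d, b, b + d, ha, had, hb, hbd, by omega, by omega, by omega,
          by omega, by omega⟩
    · rcases le_total a (b + d) with hc | hc
      · exact ⟨b, a, b + d, a + d, hb, ha, hbd, had, by omega, by omega, by omega,
          by omega, by omega⟩
      · exact ⟨b, b + d, a, a + d, hb, hbd, ha, had, by omega, by omega, by omega,
          by omega, by omega⟩
  -- Step 2 : k + d ∈ A
  have hkd : k + d ∈ A := by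
    apply hclosed _ (by omega)
    rcases le_total a b with hab | hab
    · exact ⟨d, a + d, b + d, k, hd, had, hbd, hkA, by omega, by omega, by omega,
        by omega, by omega⟩
    · exact ⟨d, b + d, a + d, k, hd, hbd, had, hkA, by omega, by omega, by omega,
        by omega, by omega⟩
  -- Step 3 : k + (b + d) ∈ A
  have hkbd : k + (b + d) ∈ A := by
    apply hclosed _ (by omega)
    exact ⟨b, b + d, k, k + d, hb, hbd, hkA, hkd, by omega, by omega, by omega,
      by omega, by omega⟩
  -- Main induction
  have main : ∀ m, 1 ≤ m → m * k ∈ A ∧ m * k + (b + d) ∈ A := by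
    intro m hm
    induction m, hm using Nat.le_induction with
    | base => exact ⟨by simpa using hkA, by simpa using hkbd⟩
    | succ m hm ih =>
      obtain ⟨ih1, ih2⟩ := ih
      have hmkk : k ≤ m * k := Nat.le_mul_of_pos_left k (by omega)
      have hmk : (m + 1) * k = m * k + k := by ring
      have hA1 : (m + 1) * k ∈ A := by
        apply hclosed _ (by omega)
        exact ⟨a, k, m * k, m * k + (b + d), ha, hkA, ih1, ih2, by omega, by omega,
          by omega, by omega, by omega⟩
      refine ⟨hA1, ?_⟩
      apply hclosed _ (by omega)
      exact ⟨b + d, k, m * k + (b + d), (m + 1) * k, hbd, hkA, ih2, hA1, by omega,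
        by omega, by omega, by omega, by omega⟩
  exact fun m hm => (main m hm).1
end

section
/- Inductive step of Lemma 1: under the hypotheses of Lemma 1 (d,a,b,a+d,b+d distinct in A, k = a+b+d > a_n, A closed under multisums above a_n), if (m-1)k+d, (m-1)k+a+d, (m-1)k+b+d, and mk are all in A for some m ≥ 1, then mk+d, mk+a+d, mk+b+d, and (m+1)k are all in A. -/
/-- Inductive step of Lemma 1. -/
theorem stmt_6 (A : Set ℕ) (an : ℕ)
    (hclosed : ∀ w > an, (∃ p u v q : ℕ, p ∈ A ∧ u ∈ A ∧ v ∈ A ∧ q ∈ A ∧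
      p < u ∧ u ≤ v ∧ v < q ∧ w = p + q ∧ w = u + v) → w ∈ A)
    (d a b : ℕ) (hd : d ∈ A) (ha : a ∈ A) (hb : b ∈ A)
    (had : a + d ∈ A) (hbd : b + d ∈ A)
    (h1 : d ≠ a) (h2 : d ≠ b) (h3 : d ≠ a + d) (h4 : d ≠ b + d)
    (h5 : a ≠ b) (h6 : a ≠ a + d) (h7 : a ≠ b + d)
    (h8 : b ≠ a + d) (h9 : b ≠ b + d) (h10 : a + d ≠ b + d)
    (k : ℕ) (hkdef : k = a + b + d) (hk : an < k)
    (m : ℕ) (hm : 1 ≤ m)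
    (ih1 : (m - 1) * k + d ∈ A) (ih2 : (m - 1) * k + a + d ∈ A)
    (ih3 : (m - 1) * k + b + d ∈ A) (ih4 : m * k ∈ A) :
    m * k + d ∈ A ∧ m * k + a + d ∈ A ∧ m * k + b + d ∈ A ∧ (m + 1) * k ∈ A := by
  have ha0 : 0 < a := by omega
  have hb0 : 0 < b := by omega
  have hd0 : 0 < d := by omega
  obtain ⟨n, rfl⟩ : ∃ n, m = n + 1 := ⟨m - 1, by omega⟩
  simp only [Nat.add_sub_cancel] at ih1 ih2 ih3
  set K := n * k with hK
  have hE : (n + 1) * k = K + k := by rw [hK]; ring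
  have hE2 : (n + 1 + 1) * k = K + k + k := by rw [hK]; ring
  rw [hE] at ih4
  have step1 : K + k + d ∈ A := by
    apply hclosed _ (by omega)
    rcases le_total (b + d) (K + a + d) with hle | hle
    · exact ⟨d, b + d, K + a + d, K + k, hd, hbd, ih2, ih4,
        by omega, hle, by omega, by omega, by omega⟩
    · exact ⟨d, K + a + d, b + d, K + k, hd, ih2, hbd, ih4,
        by omega, hle, by omega, by omega, by omega⟩
  have step2 : K + k + a + d ∈ A := by
    apply hclosed _ (by omega)
    exact ⟨a, a + d, K + k, K + k + d, ha, had, ih4, step1,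
      by omega, by omega, by omega, by omega, by omega⟩
  have step3 : K + k + b + d ∈ A := by
    apply hclosed _ (by omega)
    exact ⟨b, b + d, K + k, K + k + d, hb, hbd, ih4, step1,
      by omega, by omega, by omega, by omega, by omega⟩
  have step4 : K + k + k ∈ A := by
    apply hclosed _ (by omega)
    rcases Nat.lt_or_ge a b with hab | hab
    · exact ⟨a, b, K + k + a + d, K + k + b + d, ha, hb, step2, step3,
        hab, by omega, by omega, by omega, by omega⟩
    · have hab' : b < a := by omega
      exact ⟨b, a, K + k + b + d, K + k + a + d, hb, ha, step3, step2,
        hab', by omega, by omega, by omega, by omega⟩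
  exact ⟨by rw [hE]; exact step1, by rw [hE]; exact step2,
    by rw [hE]; exact step3, by rw [hE2]; exact step4⟩
end
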